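/- arXiv:1304.2699 — 2 statements merged into one kernel-verified Lean document; each statement's English description precedes it below -/
import Mathlib

section
/- Let f : ℕ → ℂ be an arbitrary arithmetic function. For every n ∈ ℕ and t ∈ ℤ, Σ_{k ∈ Reg_n} f(gcd(k,n)) exp(2πikt/n) = Σ_{d || n} f(d) c_{n/d}(t), where the sum on the right runs over the unitary divisors d of n and c_m(t) is the Ramanujan sum. Moreover, if f is integer-valued and multiplicative, then for each fixed t the function n ↦ Σ_{k ∈ Reg_n} f(gcd(k,n)) exp(2πikt/n) is integer-valued and multiplicative. -/
open Finset Real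
open scoped Classical

/-- `k` is regular (mod `n`): there is an integer `x` with `k² x ≡ k (mod n)`. -/
def IsRegularMod (k n : ℕ) : Prop := ∃ x : ℤ, (n : ℤ) ∣ (k : ℤ) ^ 2 * x - (k : ℤ)

/-- `Reg_n`, the set of `k ∈ {1,…,n}` that are regular (mod `n`). -/
noncomputable def Reg (n : ℕ) : Finset ℕ :=
  (Finset.Icc 1 n).filter fun k => IsRegularMod k n

/-- The unitary divisors of `n`: divisors `d` of `n` with `gcd(d, n/d) = 1`. -/
def unitaryDivisors (n : ℕ) : Finset ℕ := n.divisors.filter fun d => Nat.Coprime d (n / d)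

/-- The Ramanujan sum `c_m(t) = Σ_{1 ≤ k ≤ m, gcd(k,m)=1} exp(2πikt/m)`. -/
noncomputable def ramanujanSum (m : ℕ) (t : ℤ) : ℂ :=
  ∑ k ∈ (Finset.Icc 1 m).filter fun k => Nat.Coprime k m,
    Complex.exp (2 * Real.pi * Complex.I * k * t / m)

/-- `P^reg_{f,t}(n) = Σ_{k ∈ Reg_n} f(gcd(k,n)) exp(2πikt/n)`. -/
noncomputable def PregSum (f : ℕ → ℂ) (t : ℤ) (n : ℕ) : ℂ :=
  ∑ k ∈ Reg n, f (Nat.gcd k n) * Complex.exp (2 * Real.pi * Complex.I * k * t / n)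

/-!
An integer `k ≥ 1` is regular mod `n` exactly when `d = gcd(k, n)` is a unitary divisor of
`n`. Grouping `k ∈ Reg_n` by `d` and writing `k = d j` with `j` prime to `n / d` turns
`P^reg_{f,t}(n)` into the unitary convolution `Σ_{d ∥ n} f(d) c_{n/d}(t)`. Summing `c_d(t)` over
`d ∣ m` regroups the full geometric sum `Σ_{k ≤ m} exp(2πikt/m) = m [m ∣ t]`, so by Möbius
inversion `c_m(t) = Σ_{d ∣ m} μ(m/d) d [d ∣ t]` is integer-valued and multiplicative. Finally,
for coprime `a`, `b` the unitary divisors of `a b` are exactly the products of those of `a` and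
`b`, so unitary convolution preserves multiplicativity.
-/

open ArithmeticFunction
open scoped ArithmeticFunction.Moebius

lemma Int.isCoprime_iff_exists_dvd_mul_sub_one {a m : ℤ} :
    IsCoprime a m ↔ ∃ x, m ∣ a * x - 1 := by
  constructor
  · rintro ⟨u, v, huv⟩
    exact ⟨u, -v, by linear_combination huv⟩
  · rintro ⟨x, y, hy⟩
    exact ⟨x, -y, by linear_combination hy⟩

lemma isRegularMod_mul_mul_iff {d k m : ℕ} (hd : d ≠ 0) (hkm : Nat.Coprime k m) :
    IsRegularMod (d * k) (d * m) ↔ Nat.Coprime d m := by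
  have hd' : (d : ℤ) ≠ 0 := by exact_mod_cast hd
  have key (x : ℤ) : ((d * m : ℕ) : ℤ) ∣ ((d * k : ℕ) : ℤ) ^ 2 * x - (d * k : ℕ) ↔
      (m : ℤ) ∣ (d * k : ℕ) * x - 1 := by
    rw [show ((d * k : ℕ) : ℤ) ^ 2 * x - (d * k : ℕ) = d * (k * ((d * k : ℕ) * x - 1)) by
      push_cast; ring, Nat.cast_mul, mul_dvd_mul_iff_left hd']
    exact ⟨hkm.symm.isCoprime.dvd_of_dvd_mul_left, fun h => dvd_mul_of_dvd_right h _⟩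
  simp only [IsRegularMod, key, ← Int.isCoprime_iff_exists_dvd_mul_sub_one,
    Nat.isCoprime_iff_coprime, Nat.coprime_mul_iff_left]
  exact and_iff_left hkm

lemma mem_unitaryDivisors {d n : ℕ} :
    d ∈ unitaryDivisors n ↔ d ∣ n ∧ Nat.Coprime d (n / d) ∧ n ≠ 0 := by
  simp only [unitaryDivisors, mem_filter, Nat.mem_divisors]
  tauto

lemma isRegularMod_iff_gcd_mem_unitaryDivisors {k n : ℕ} (hn : n ≠ 0) :
    IsRegularMod k n ↔ k.gcd n ∈ unitaryDivisors n := by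
  have hd : k.gcd n ≠ 0 := Nat.gcd_ne_zero_right hn
  have h := isRegularMod_mul_mul_iff hd (Nat.coprime_div_gcd_div_gcd (Nat.pos_of_ne_zero hd))
  rw [Nat.mul_div_cancel' (Nat.gcd_dvd_left k n),
    Nat.mul_div_cancel' (Nat.gcd_dvd_right k n)] at h
  rw [h, mem_unitaryDivisors]
  exact ⟨fun h => ⟨Nat.gcd_dvd_right k n, h, hn⟩, fun h => h.2.1⟩

lemma Reg_eq_filter_gcd_mem_unitaryDivisors (n : ℕ) :
    Reg n = {k ∈ Icc 1 n | k.gcd n ∈ unitaryDivisors n} := by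
  rcases eq_or_ne n 0 with rfl | hn
  · rfl
  · exact filter_congr fun k _ => isRegularMod_iff_gcd_mem_unitaryDivisors hn

lemma sum_Icc_filter_gcd_eq {M : Type*} [AddCommMonoid M] {d n : ℕ} (hd : d ∣ n) (hn : n ≠ 0)
    (G : ℕ → M) :
    ∑ k ∈ Icc 1 n with k.gcd n = d, G k =
      ∑ j ∈ Icc 1 (n / d) with j.Coprime (n / d), G (d * j) := by
  obtain ⟨m, rfl⟩ := hd
  have hd0 : 0 < d := Nat.pos_of_ne_zero (left_ne_zero_of_mul hn)
  rw [Nat.mul_div_cancel_left m hd0]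
  symm
  refine sum_nbij' (d * ·) (· / d) (fun j hj => ?_) (fun k hk => ?_) (fun j _ => ?_)
    (fun k hk => ?_) (fun _ _ => rfl)
  · simp only [mem_filter, mem_Icc] at hj ⊢
    refine ⟨⟨Nat.mul_pos hd0 hj.1.1, Nat.mul_le_mul_left d hj.1.2⟩, ?_⟩
    rw [Nat.gcd_mul_left, hj.2, mul_one]
  · simp only [mem_filter, mem_Icc] at hk ⊢
    obtain ⟨⟨hk1, hkn⟩, hgcd⟩ := hk
    have hdk : d ∣ k := hgcd ▸ Nat.gcd_dvd_left k (d * m)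
    refine ⟨⟨Nat.div_pos (Nat.le_of_dvd hk1 hdk) hd0, ?_⟩, ?_⟩
    · exact Nat.div_le_of_le_mul hkn
    · have := Nat.coprime_div_gcd_div_gcd (Nat.gcd_pos_of_pos_left (d * m) hk1)
      rwa [hgcd, Nat.mul_div_cancel_left m hd0] at this
  · exact Nat.mul_div_cancel_left j hd0
  · exact Nat.mul_div_cancel' ((mem_filter.1 hk).2 ▸ Nat.gcd_dvd_left k (d * m))

lemma exp_two_pi_I_mul_div_of_dvd {d n : ℕ} (hdn : d ∣ n) (hd : d ≠ 0) (j : ℕ) (t : ℤ) :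
    Complex.exp (2 * π * Complex.I * ((d * j : ℕ) : ℂ) * t / n) =
      Complex.exp (2 * π * Complex.I * j * t / ((n / d : ℕ) : ℂ)) := by
  obtain ⟨m, rfl⟩ := hdn
  rw [Nat.mul_div_cancel_left m (Nat.pos_of_ne_zero hd), Nat.cast_mul, Nat.cast_mul,
    show 2 * π * Complex.I * (d * j) * t = d * (2 * π * Complex.I * j * t) by ring,
    mul_div_mul_left _ _ (Nat.cast_ne_zero.2 hd)]

lemma ramanujanSum_div_eq_sum_filter_gcd {d n : ℕ} (hdn : d ∣ n) (hn : n ≠ 0) (t : ℤ) :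
    ramanujanSum (n / d) t =
      ∑ k ∈ Icc 1 n with k.gcd n = d, Complex.exp (2 * π * Complex.I * k * t / n) := by
  rw [sum_Icc_filter_gcd_eq hdn hn, ramanujanSum]
  exact sum_congr rfl fun j _ =>
    (exp_two_pi_I_mul_div_of_dvd hdn (ne_zero_of_dvd_ne_zero hn hdn) j t).symm

theorem PregSum_eq_sum_unitaryDivisors (f : ℕ → ℂ) (t : ℤ) (n : ℕ) :
    PregSum f t n = ∑ d ∈ unitaryDivisors n, f d * ramanujanSum (n / d) t := by
  rw [PregSum, Reg_eq_filter_gcd_mem_unitaryDivisors, ← sum_fiberwise_eq_sum_filter]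
  refine sum_congr rfl fun d hd => ?_
  obtain ⟨hdn, -, hn⟩ := mem_unitaryDivisors.1 hd
  rw [ramanujanSum_div_eq_sum_filter_gcd hdn hn, mul_sum]
  exact sum_congr rfl fun k hk => by rw [(mem_filter.1 hk).2]

lemma sum_Icc_pow_eq_zero {R : Type*} [CommRing R] [IsDomain R] {z : R} {m : ℕ}
    (hzm : z ^ m = 1) (hz : z ≠ 1) : ∑ k ∈ Icc 1 m, z ^ k = 0 := by
  have hgeom : (∑ k ∈ range m, z ^ k) * (z - 1) = 0 := by rw [geom_sum_mul, hzm, sub_self]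
  rw [← Ico_add_one_right_eq_Icc, sum_Ico_eq_sum_range, add_tsub_cancel_right]
  simp only [pow_add, pow_one, ← mul_sum]
  rw [(mul_eq_zero.1 hgeom).resolve_right (sub_ne_zero.2 hz), mul_zero]

lemma sum_Icc_exp_two_pi_I_mul_div {m : ℕ} (hm : m ≠ 0) (t : ℤ) :
    ∑ k ∈ Icc 1 m, Complex.exp (2 * π * Complex.I * k * t / m) =
      if (m : ℤ) ∣ t then (m : ℂ) else 0 := by
  have hζ := Complex.isPrimitiveRoot_exp m hm
  set z := Complex.exp (2 * π * Complex.I / m) ^ t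
  have hexp (k : ℕ) : Complex.exp (2 * π * Complex.I * k * t / m) = z ^ k := by
    rw [← zpow_natCast, ← zpow_mul, ← Complex.exp_int_mul]
    push_cast
    ring_nf
  simp only [hexp]
  split_ifs with hdvd
  · simp [z, (hζ.zpow_eq_one_iff_dvd t).2 hdvd]
  · refine sum_Icc_pow_eq_zero ?_ (mt (hζ.zpow_eq_one_iff_dvd t).1 hdvd)
    rw [← zpow_natCast, ← zpow_mul, mul_comm t, zpow_mul, zpow_natCast, hζ.pow_eq_one,
      one_zpow]

theorem sum_divisors_ramanujanSum {m : ℕ} (hm : m ≠ 0) (t : ℤ) :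
    ∑ d ∈ m.divisors, ramanujanSum d t = if (m : ℤ) ∣ t then (m : ℂ) else 0 := by
  calc ∑ d ∈ m.divisors, ramanujanSum d t = ∑ d ∈ m.divisors, ramanujanSum (m / d) t :=
        (Nat.sum_div_divisors m _).symm
    _ = ∑ d ∈ m.divisors, ∑ k ∈ Icc 1 m with k.gcd m = d,
          Complex.exp (2 * π * Complex.I * k * t / m) :=
        sum_congr rfl fun d hd =>
          ramanujanSum_div_eq_sum_filter_gcd (Nat.dvd_of_mem_divisors hd) hm t
    _ = ∑ k ∈ Icc 1 m, Complex.exp (2 * π * Complex.I * k * t / m) :=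
        sum_fiberwise_of_maps_to (fun k _ => Nat.mem_divisors.2 ⟨Nat.gcd_dvd_right k m, hm⟩) _
    _ = _ := sum_Icc_exp_two_pi_I_mul_div hm t

def idOfDvd (t : ℤ) : ArithmeticFunction ℤ :=
  ⟨fun n => if (n : ℤ) ∣ t then n else 0, by simp⟩

lemma idOfDvd_apply (t : ℤ) (n : ℕ) :
    idOfDvd t n = if (n : ℤ) ∣ t then (n : ℤ) else 0 := rfl

lemma isMultiplicative_idOfDvd (t : ℤ) : (idOfDvd t).IsMultiplicative := by
  refine ⟨by simp [idOfDvd_apply], fun {a b} hab => ?_⟩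
  have hdvd : ((a * b : ℕ) : ℤ) ∣ t ↔ (a : ℤ) ∣ t ∧ (b : ℤ) ∣ t := by
    simp only [Int.natCast_dvd]
    exact ⟨fun h => ⟨(dvd_mul_right a b).trans h, (dvd_mul_left b a).trans h⟩,
      fun h => hab.mul_dvd_of_dvd_of_dvd h.1 h.2⟩
  simp only [idOfDvd_apply, hdvd]
  split_ifs <;> simp_all

theorem ramanujanSum_eq_moebius_mul_idOfDvd (m : ℕ) (t : ℤ) :
    ramanujanSum m t = ((μ * idOfDvd t) m : ℂ) := by
  rcases eq_or_ne m 0 with rfl | hm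
  · simp [ramanujanSum]
  have := (sum_eq_iff_sum_mul_moebius_eq (f := (ramanujanSum · t))
    (g := fun n => ((idOfDvd t n : ℤ) : ℂ))).1
    (fun n hn => by rw [sum_divisors_ramanujanSum hn.ne', idOfDvd_apply]; push_cast; rfl)
    m (Nat.pos_of_ne_zero hm)
  rw [← this, mul_apply]
  push_cast
  rfl

theorem Nat.Coprime.sum_divisors_mul_eq_sum_product {M : Type*} [AddCommMonoid M] {a b : ℕ}
    (hab : a.Coprime b) (F : ℕ → M) :
    ∑ d ∈ (a * b).divisors, F d = ∑ p ∈ a.divisors ×ˢ b.divisors, F (p.1 * p.2) := by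
  rw [Nat.divisors_mul, Finset.mul_def, sum_image hab.mul_injOn_divisors]

lemma coprime_mul_div_mul_iff {a b x y : ℕ} (hab : a.Coprime b) (hx : x ∣ a) (hy : y ∣ b) :
    (x * y).Coprime (a * b / (x * y)) ↔ x.Coprime (a / x) ∧ y.Coprime (b / y) := by
  have hxb : x.Coprime (b / y) :=
    (hab.coprime_dvd_left hx).coprime_dvd_right (Nat.div_dvd_of_dvd hy)
  have hya : y.Coprime (a / x) :=
    (hab.symm.coprime_dvd_left hy).coprime_dvd_right (Nat.div_dvd_of_dvd hx)
  rw [← Nat.div_mul_div_comm hx hy, Nat.coprime_mul_iff_left, Nat.coprime_mul_iff_right,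
    Nat.coprime_mul_iff_right]
  exact ⟨fun h => ⟨h.1.1, h.2.2⟩, fun h => ⟨⟨h.1, hxb⟩, hya, h.2⟩⟩

theorem sum_unitaryDivisors_mul {M : Type*} [AddCommMonoid M] {a b : ℕ} (hab : a.Coprime b)
    (F : ℕ → M) :
    ∑ d ∈ unitaryDivisors (a * b), F d =
      ∑ p ∈ unitaryDivisors a ×ˢ unitaryDivisors b, F (p.1 * p.2) := by
  rw [unitaryDivisors, unitaryDivisors, unitaryDivisors, ← filter_product, sum_filter, sum_filter,
    hab.sum_divisors_mul_eq_sum_product]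
  refine sum_congr rfl fun p hp => ?_
  obtain ⟨hpa, hpb⟩ := mem_product.1 hp
  exact if_congr (coprime_mul_div_mul_iff hab (Nat.dvd_of_mem_divisors hpa)
    (Nat.dvd_of_mem_divisors hpb)) rfl rfl

lemma unitaryDivisors_one : unitaryDivisors 1 = {1} := by
  decide

def unitaryConv {R : Type*} [CommSemiring R] (f g : ℕ → R) (n : ℕ) : R :=
  ∑ d ∈ unitaryDivisors n, f d * g (n / d)

section unitaryConv

variable {R : Type*} [CommSemiring R] {f g : ℕ → R}

lemma unitaryConv_one : unitaryConv f g 1 = f 1 * g 1 := by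
  simp [unitaryConv, unitaryDivisors_one]

lemma unitaryConv_mul_of_coprime (hf : ∀ a b, a.Coprime b → f (a * b) = f a * f b)
    (hg : ∀ a b, a.Coprime b → g (a * b) = g a * g b) {a b : ℕ} (hab : a.Coprime b) :
    unitaryConv f g (a * b) = unitaryConv f g a * unitaryConv f g b := by
  rw [unitaryConv, sum_unitaryDivisors_mul hab, unitaryConv, unitaryConv, sum_mul_sum,
    ← sum_product']
  refine sum_congr rfl fun p hp => ?_
  obtain ⟨hpa, hpb⟩ := mem_product.1 hp
  obtain ⟨hxa, -, -⟩ := mem_unitaryDivisors.1 hpa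
  obtain ⟨hyb, -, -⟩ := mem_unitaryDivisors.1 hpb
  have hxy : p.1.Coprime p.2 := (hab.coprime_dvd_left hxa).coprime_dvd_right hyb
  have hquot : (a / p.1).Coprime (b / p.2) :=
    (hab.coprime_dvd_left (Nat.div_dvd_of_dvd hxa)).coprime_dvd_right (Nat.div_dvd_of_dvd hyb)
  rw [← Nat.div_mul_div_comm hxa hyb, hf _ _ hxy, hg _ _ hquot]
  ring

end unitaryConv

theorem PregSum_eq_and_multiplicative (f : ℕ → ℂ) :
    (∀ n : ℕ, 1 ≤ n → ∀ t : ℤ,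
        PregSum f t n = ∑ d ∈ unitaryDivisors n, f d * ramanujanSum (n / d) t) ∧
    ((∀ n : ℕ, ∃ z : ℤ, f n = (z : ℂ)) →
      (f 1 = 1 ∧ ∀ a b : ℕ, Nat.Coprime a b → f (a * b) = f a * f b) →
      ∀ t : ℤ,
        (∀ n : ℕ, ∃ z : ℤ, PregSum f t n = (z : ℂ)) ∧
        (PregSum f t 1 = 1 ∧
          ∀ a b : ℕ, Nat.Coprime a b → PregSum f t (a * b) = PregSum f t a * PregSum f t b)) := by
  refine ⟨fun n _ t => PregSum_eq_sum_unitaryDivisors f t n, fun hf_int ⟨hf1, hf⟩ t => ?_⟩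
  have hP : PregSum f t = unitaryConv f fun m => ((μ * idOfDvd t) m : ℂ) := by
    ext n
    simp only [PregSum_eq_sum_unitaryDivisors, unitaryConv, ramanujanSum_eq_moebius_mul_idOfDvd]
  have hc_mult := isMultiplicative_moebius.mul (isMultiplicative_idOfDvd t)
  choose z hz using hf_int
  rw [hP]
  refine ⟨fun n => ⟨unitaryConv z (fun m => (μ * idOfDvd t) m) n, ?_⟩, ?_,
    fun a b hab => ?_⟩
  · simp only [unitaryConv, hz, Int.cast_sum, Int.cast_mul]
  · rw [unitaryConv_one, hf1, hc_mult.map_one, Int.cast_one, mul_one]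
  · refine unitaryConv_mul_of_coprime hf (fun a b hab => ?_) hab
    simp [hc_mult.map_mul_of_coprime hab]
end

section
/- For every odd n ∈ ℕ, Σ_{k ∈ Reg_n} tan⁴(kπ/n) = (1/3)(ρ_4(n) − 4ρ_2(n) + 3ρ(n)), where ρ_s(n) = Σ_{d || n} φ_s(d) with φ_s(n) = Σ_{d|n} d^s μ(n/d), and ρ(n) = ρ_1(n) = #Reg_n. -/
/-!
`k` is regular (mod `n`) exactly when `gcd(k, n)` is a unitary divisor of `n`. Grouping `k` by
`d = gcd(k, n)`, the fractions `k / n` with `gcd(k, n) = d` are the reduced fractions with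
denominator `n / d`; so `∑_{k ∈ Reg_n} h(k/n) = ∑_{e ∥ n} S_e(h)`, where `S_e(h)` sums `h` over the
reduced fractions in `(0, 1]` with denominator `e`, and Möbius inversion of
`∑_{k ≤ n} h(k/n) = ∑_{d ∣ n} S_d(h)` gives `S_e(h) = ∑_{d ∣ e} μ(e/d) ∑_{k ≤ d} h(k/d)`.

For `h(q) = tan⁴(qπ)` the complete sums are `(d⁴ - 4d² + 3d)/3` for odd `d`: if `ζ = e^{2iθ}` is an
`n`-th root of unity, `n` odd, then `sec² θ = ∑_{j<n} (-1)^j (n - 2j) ζ^j`, and orthogonality of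
the `n`-th roots of unity evaluates `∑_k sec²(kπ/n) = n²` and
`∑_k sec⁴(kπ/n) = n ∑_{j<n} (n - 2j)²`.
-/

open Finset Real
open scoped Classical

/-- The Jordan function `φ_s(n) = Σ_{d ∣ n} d^s μ(n/d)` for `s ∈ ℕ`. -/
def phiInt (s n : ℕ) : ℤ :=
  ∑ d ∈ n.divisors, ArithmeticFunction.moebius (n / d) * (d : ℤ) ^ s

/-- `ρ_s(n) = Σ_{d ∥ n} φ_s(d)`, the sum over the unitary divisors of `n`. -/
def rhoInt (s n : ℕ) : ℤ := ∑ d ∈ unitaryDivisors n, phiInt s d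

section ReducedFractions

variable {M : Type*} [AddCommMonoid M] (h : ℚ → M)

def reducedFracSum (e : ℕ) : M := ∑ m ∈ (Icc 1 e).filter (·.Coprime e), h (m / e)

theorem Nat.gcd_mul_left_eq_left_iff {d m e : ℕ} (hd : d ≠ 0) :
    (d * m).gcd (d * e) = d ↔ m.Coprime e := by
  rw [Nat.gcd_mul_left, Nat.mul_eq_left hd, Nat.Coprime]

theorem sum_filter_gcd_eq_reducedFracSum {d e : ℕ} (hd : d ≠ 0) :
    ∑ k ∈ (Icc 1 (d * e)).filter (·.gcd (d * e) = d), h (k / (d * e : ℕ)) =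
      reducedFracSum h e := by
  symm
  refine sum_nbij' (d * ·) (· / d) ?_ ?_ ?_ ?_ ?_
  · intro m hm
    simp only [mem_filter, mem_Icc] at hm ⊢
    refine ⟨⟨?_, Nat.mul_le_mul_left d hm.1.2⟩, (Nat.gcd_mul_left_eq_left_iff hd).2 hm.2⟩
    exact Nat.one_le_iff_ne_zero.2 (mul_ne_zero hd (by omega))
  · intro k hk
    simp only [mem_filter, mem_Icc] at hk ⊢
    obtain ⟨m, rfl⟩ : d ∣ k := hk.2 ▸ Nat.gcd_dvd_left k (d * e)
    rw [Nat.mul_div_cancel_left m (Nat.pos_of_ne_zero hd)]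
    refine ⟨⟨?_, Nat.le_of_mul_le_mul_left hk.1.2 (Nat.pos_of_ne_zero hd)⟩,
      (Nat.gcd_mul_left_eq_left_iff hd).1 hk.2⟩
    exact Nat.pos_of_ne_zero (by rintro rfl; simp at hk)
  · intro m _
    exact Nat.mul_div_cancel_left m (Nat.pos_of_ne_zero hd)
  · intro k hk
    simp only [mem_filter] at hk
    exact Nat.mul_div_cancel' (hk.2 ▸ Nat.gcd_dvd_left k (d * e))
  · intro m _
    push_cast
    rw [mul_div_mul_left _ _ (Nat.cast_ne_zero.2 hd)]

theorem sum_filter_gcd_mem_eq_sum_reducedFracSum {n : ℕ} (hn : n ≠ 0) {D : Finset ℕ}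
    (hD : D ⊆ n.divisors) :
    ∑ k ∈ (Icc 1 n).filter (·.gcd n ∈ D), h (k / n) = ∑ d ∈ D, reducedFracSum h (n / d) := by
  rw [← sum_fiberwise_of_maps_to (g := fun k : ℕ => k.gcd n) (t := D) (f := fun k : ℕ => h (k / n))
    (fun k hk => (mem_filter.1 hk).2)]
  refine sum_congr rfl fun d hdD => ?_
  obtain ⟨hdn, -⟩ := Nat.mem_divisors.1 (hD hdD)
  have hd : d ≠ 0 := ne_zero_of_dvd_ne_zero hn hdn
  rw [filter_filter, ← sum_filter_gcd_eq_reducedFracSum h hd, Nat.mul_div_cancel' hdn]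
  congr 1
  exact filter_congr fun k _ => ⟨fun hk => hk.2, fun hk => ⟨hk ▸ hdD, hk⟩⟩

theorem sum_Icc_eq_sum_divisors_reducedFracSum {n : ℕ} (hn : n ≠ 0) :
    ∑ k ∈ Icc 1 n, h (k / n) = ∑ d ∈ n.divisors, reducedFracSum h d := by
  rw [← Nat.sum_div_divisors, ← sum_filter_gcd_mem_eq_sum_reducedFracSum h hn subset_rfl]
  congr 1
  exact (filter_true_of_mem fun k _ => Nat.mem_divisors.2 ⟨Nat.gcd_dvd_right k n, hn⟩).symm

theorem reducedFracSum_eq_sum_moebius {G : Type*} [AddCommGroup G] (h : ℚ → G) {n : ℕ}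
    (hn : 0 < n) :
    reducedFracSum h n =
      ∑ d ∈ n.divisors, ArithmeticFunction.moebius (n / d) • ∑ k ∈ Icc 1 d, h (k / d) := by
  rw [← Nat.sum_divisorsAntidiagonal'
    (fun a b => ArithmeticFunction.moebius a • ∑ k ∈ Icc 1 b, h (k / b))]
  refine (ArithmeticFunction.sum_eq_iff_sum_smul_moebius_eq
    (f := reducedFracSum h) (g := fun m => ∑ k ∈ Icc 1 m, h (k / m)).1 ?_ n hn).symm
  exact fun m hm => (sum_Icc_eq_sum_divisors_reducedFracSum h hm.ne').symm

end ReducedFractions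

section Regular

theorem exists_dvd_mul_sub_one_iff_isCoprime {R : Type*} [CommRing R] (a b : R) :
    (∃ x, b ∣ a * x - 1) ↔ IsCoprime a b := by
  constructor
  · rintro ⟨x, y, hy⟩
    exact ⟨x, -y, by linear_combination hy⟩
  · rintro ⟨u, v, huv⟩
    exact ⟨u, -v, by linear_combination huv⟩

theorem isRegularMod_iff {k n : ℕ} (hn : n ≠ 0) :
    IsRegularMod k n ↔ (k.gcd n).Coprime (n / k.gcd n) := by
  obtain ⟨k', n', hkn', hk, hn'⟩ := Nat.exists_coprime k n
  set d := k.gcd n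
  have hd0 : d ≠ 0 := Nat.gcd_ne_zero_right hn
  have hd : (d : ℤ) ≠ 0 := Nat.cast_ne_zero.2 hd0
  have hk'n' : IsCoprime (k' : ℤ) n' := Nat.isCoprime_iff_coprime.2 hkn'
  have key (x : ℤ) : (n : ℤ) ∣ (k : ℤ) ^ 2 * x - k ↔ (n' : ℤ) ∣ (d * k') * x - 1 := by
    have hfactor : (k : ℤ) ^ 2 * x - k = d * (k' * ((d * k') * x - 1)) := by
      rw [hk]; push_cast; ring
    rw [hfactor, hn', Nat.cast_mul, mul_comm (n' : ℤ), mul_dvd_mul_iff_left hd]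
    exact ⟨hk'n'.symm.dvd_of_dvd_mul_left, fun h => h.mul_left _⟩
  rw [hn', Nat.mul_div_cancel _ (Nat.pos_of_ne_zero hd0),
    ← Nat.isCoprime_iff_coprime, ← hn']
  simp only [IsRegularMod, key, exists_dvd_mul_sub_one_iff_isCoprime, IsCoprime.mul_left_iff,
    and_iff_left hk'n']

theorem div_mem_unitaryDivisors {d n : ℕ} (hd : d ∈ unitaryDivisors n) :
    n / d ∈ unitaryDivisors n := by
  simp only [unitaryDivisors, mem_filter, Nat.mem_divisors] at hd ⊢
  obtain ⟨⟨hdn, hn⟩, hcop⟩ := hd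
  rw [Nat.div_div_self hdn hn]
  exact ⟨⟨Nat.div_dvd_of_dvd hdn, hn⟩, hcop.symm⟩

theorem sum_unitaryDivisors_div {M : Type*} [AddCommMonoid M] (n : ℕ) (f : ℕ → M) :
    ∑ d ∈ unitaryDivisors n, f (n / d) = ∑ d ∈ unitaryDivisors n, f d := by
  have hinv {d} (hd : d ∈ unitaryDivisors n) : n / (n / d) = d :=
    Nat.div_div_self (Nat.mem_divisors.1 (mem_filter.1 hd).1).1
      (Nat.mem_divisors.1 (mem_filter.1 hd).1).2
  exact sum_nbij' (n / ·) (n / ·) (fun d hd => div_mem_unitaryDivisors hd)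
    (fun d hd => div_mem_unitaryDivisors hd) (fun d hd => hinv hd) (fun d hd => hinv hd)
    (fun _ _ => rfl)

theorem reg_eq_filter {n : ℕ} (hn : n ≠ 0) :
    Reg n = (Icc 1 n).filter (·.gcd n ∈ unitaryDivisors n) := by
  refine filter_congr fun k _ => ?_
  simp [isRegularMod_iff hn, unitaryDivisors, Nat.gcd_dvd_right, hn]

theorem sum_reg_eq_sum_reducedFracSum {M : Type*} [AddCommMonoid M] (h : ℚ → M) {n : ℕ}
    (hn : n ≠ 0) :
    ∑ k ∈ Reg n, h (k / n) = ∑ e ∈ unitaryDivisors n, reducedFracSum h e := by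
  rw [reg_eq_filter hn, sum_filter_gcd_mem_eq_sum_reducedFracSum h hn (D := unitaryDivisors n)
      (filter_subset _ _),
    sum_unitaryDivisors_div n (reducedFracSum h)]

end Regular

section RootsOfUnity

variable {R : Type*} [CommRing R]

theorem one_sub_mul_sum_range_mul_pow (x : R) (m : ℕ) :
    (1 - x) * ∑ i ∈ range m, (i : R) * x ^ i + m * x ^ m = x * ∑ i ∈ range m, x ^ i := by
  induction m with
  | zero => simp
  | succ m ih =>
    rw [sum_range_succ, sum_range_succ]
    push_cast
    linear_combination ih

variable (R) in
def secSqCoeff (n j : ℕ) : R := (-1) ^ j * ((n : R) - 2 * j)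

theorem one_add_sq_mul_sum_secSqCoeff {n : ℕ} (hn : Odd n) {ζ : R} (hζ : ζ ^ n = 1) :
    (1 + ζ) ^ 2 * ∑ j ∈ range n, secSqCoeff R n j * ζ ^ j = 4 * ζ := by
  set P := ∑ j ∈ range n, (-ζ) ^ j
  set Q := ∑ j ∈ range n, (j : R) * (-ζ) ^ j
  have hP : (1 + ζ) * P = 2 := by
    have h := mul_neg_geom_sum (-ζ) n
    rw [hn.neg_pow, hζ] at h
    linear_combination h
  have hQ : (1 + ζ) * Q = P + n - 2 := by
    have h := one_sub_mul_sum_range_mul_pow (-ζ) n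
    rw [hn.neg_pow, hζ] at h
    linear_combination h - hP
  have hsum : ∑ j ∈ range n, secSqCoeff R n j * ζ ^ j = n * P - 2 * Q := by
    simp only [P, Q, secSqCoeff, mul_sum, ← sum_sub_distrib]
    refine sum_congr rfl fun j _ => ?_
    rw [neg_pow]
    ring
  rw [hsum]
  linear_combination (n * (1 + ζ) - 2) * hP - 2 * (1 + ζ) * hQ

theorem three_mul_sum_range_sub_two_mul_sq (x : R) (m : ℕ) :
    3 * ∑ j ∈ range m, (x - 2 * j) ^ 2 =
      m * (3 * x ^ 2 - 6 * x * (m - 1) + 2 * (m - 1) * (2 * m - 1)) := by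
  induction m with
  | zero => simp
  | succ m ih =>
    rw [sum_range_succ]
    push_cast
    linear_combination ih

theorem secSqCoeff_mul_secSqCoeff_sub_mod {n j : ℕ} (hn : Odd n) (hj : j < n) :
    secSqCoeff R n j * secSqCoeff R n ((n - j) % n) = ((n : R) - 2 * j) ^ 2 := by
  rcases j.eq_zero_or_pos with rfl | hj0
  · simp [secSqCoeff, Nat.mod_self]
    ring
  · rw [Nat.mod_eq_of_lt (Nat.sub_lt (hj0.trans hj) hj0)]
    have hsign : (-1 : R) ^ j * (-1) ^ (n - j) = -1 := by
      rw [← pow_add, Nat.add_sub_cancel' hj.le, hn.neg_one_pow]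
    unfold secSqCoeff
    rw [Nat.cast_sub hj.le]
    linear_combination ((n : R) - 2 * j) * (n - 2 * (n - j)) * hsign

theorem Nat.dvd_add_iff_eq_sub_mod {n j l : ℕ} (hj : j < n) (hl : l < n) :
    n ∣ j + l ↔ l = (n - j) % n := by
  rcases j.eq_zero_or_pos with rfl | hj0
  · rw [Nat.sub_zero, Nat.mod_self, zero_add]
    exact ⟨fun h => Nat.eq_zero_of_dvd_of_lt h hl, fun h => h ▸ dvd_zero n⟩
  · rw [Nat.mod_eq_of_lt (Nat.sub_lt (hj0.trans hj) hj0)]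
    constructor
    · rintro ⟨c, hc⟩
      have hc2 : c < 2 := by nlinarith
      interval_cases c <;> omega
    · intro h
      exact ⟨1, by omega⟩

variable [IsDomain R] {n : ℕ} {ω : R}

theorem IsPrimitiveRoot.sum_range_pow_pow (hω : IsPrimitiveRoot ω n) (m : ℕ) :
    ∑ k ∈ range n, (ω ^ k) ^ m = if n ∣ m then (n : R) else 0 := by
  simp_rw [← pow_mul, mul_comm _ m, pow_mul]
  split_ifs with hm
  · simp [(hω.pow_eq_one_iff_dvd m).2 hm]
  · have hne : ω ^ m ≠ 1 := mt (hω.pow_eq_one_iff_dvd m).1 hm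
    have h := mul_neg_geom_sum (ω ^ m) n
    rw [pow_right_comm, hω.pow_eq_one, one_pow, sub_self] at h
    exact (mul_eq_zero.1 h).resolve_left (sub_ne_zero.2 hne.symm)

theorem IsPrimitiveRoot.sum_range_sum_mul_pow (hω : IsPrimitiveRoot ω n) (a : ℕ → R) :
    ∑ k ∈ range n, ∑ j ∈ range n, a j * (ω ^ k) ^ j = n * a 0 := by
  rcases n.eq_zero_or_pos with rfl | hn
  · simp
  rw [sum_comm]
  simp_rw [← mul_sum, hω.sum_range_pow_pow]
  rw [sum_eq_single_of_mem 0 (mem_range.2 hn) fun j hj hj0 => ?_]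
  · simp [mul_comm]
  · rw [if_neg fun h => hj0 (Nat.eq_zero_of_dvd_of_lt h (mem_range.1 hj)), mul_zero]

theorem IsPrimitiveRoot.sum_range_sq_sum_mul_pow (hω : IsPrimitiveRoot ω n) (a : ℕ → R) :
    ∑ k ∈ range n, (∑ j ∈ range n, a j * (ω ^ k) ^ j) ^ 2 =
      n * ∑ j ∈ range n, a j * a ((n - j) % n) := by
  have hterm (k j l : ℕ) : a j * (ω ^ k) ^ j * (a l * (ω ^ k) ^ l) =
      a j * a l * (ω ^ k) ^ (j + l) := by ring
  simp_rw [sq, sum_mul_sum, hterm]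
  rw [sum_comm, mul_sum]
  refine sum_congr rfl fun j hj => ?_
  rw [sum_comm]
  simp_rw [← mul_sum, hω.sum_range_pow_pow]
  have hmem : (n - j) % n ∈ range n :=
    mem_range.2 (Nat.mod_lt _ (Nat.zero_lt_of_lt (mem_range.1 hj)))
  rw [sum_eq_single_of_mem _ hmem fun l hl hne => ?_]
  · rw [if_pos ((Nat.dvd_add_iff_eq_sub_mod (mem_range.1 hj) (mem_range.1 hmem)).2 rfl)]
    ring
  · rw [if_neg (mt (Nat.dvd_add_iff_eq_sub_mod (mem_range.1 hj) (mem_range.1 hl)).1 hne),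
      mul_zero]

end RootsOfUnity

section Tangent

theorem Complex.four_mul_cos_sq_mul_exp (z : ℂ) :
    4 * cos z ^ 2 * exp (2 * z * I) = (1 + exp (2 * z * I)) ^ 2 := by
  have hcos := two_cos z
  have hsq : exp (2 * z * I) = exp (z * I) ^ 2 := by rw [← exp_nat_mul]; ring_nf
  have hinv : exp (-z * I) * exp (z * I) = 1 := by rw [← exp_add]; ring_nf; exact exp_zero
  rw [hsq]
  linear_combination exp (z * I) ^ 2 * (2 * cos z + exp (z * I) + exp (-z * I)) * hcos +
    (2 * exp (z * I) ^ 2 + exp (-z * I) * exp (z * I) + 1) * hinv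

theorem Complex.tan_sq_add_one_eq_sum {n : ℕ} (hn : Odd n) {z : ℂ} (hz : exp (2 * z * I) ^ n = 1) :
    tan z ^ 2 + 1 = ∑ j ∈ range n, secSqCoeff ℂ n j * exp (2 * z * I) ^ j := by
  set ζ := exp (2 * z * I)
  have hS := one_add_sq_mul_sum_secSqCoeff hn hz
  set S := ∑ j ∈ range n, secSqCoeff ℂ n j * ζ ^ j
  have hcos := four_mul_cos_sq_mul_exp z
  have hζ : 1 + ζ ≠ 0 := fun h => by
    rw [show ζ = -1 by linear_combination h, hn.neg_one_pow] at hz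
    norm_num at hz
  have hcos0 : cos z ≠ 0 := fun h => hζ (by simpa [h] using hcos.symm)
  have hScos : S * cos z ^ 2 = 1 := by
    have h4ζ : 4 * ζ ≠ 0 := mul_ne_zero (by norm_num) (exp_ne_zero _)
    refine mul_left_cancel₀ h4ζ ?_
    linear_combination S * hcos + hS
  rw [← inv_inv (tan z ^ 2 + 1), add_comm, inv_one_add_tan_sq hcos0]
  exact (eq_inv_of_mul_eq_one_left hScos).symm

theorem sum_range_tan_pow_four {n : ℕ} (hn : Odd n) :
    ∑ k ∈ range n, tan (k * π / n) ^ 4 = ((n : ℝ) ^ 4 - 4 * n ^ 2 + 3 * n) / 3 := by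
  set ω := Complex.exp (2 * π * Complex.I / n)
  have hω : IsPrimitiveRoot ω n := Complex.isPrimitiveRoot_exp n hn.pos.ne'
  have htan (k : ℕ) : (tan (k * π / n) : ℂ) ^ 4 =
      (∑ j ∈ range n, secSqCoeff ℂ n j * (ω ^ k) ^ j) ^ 2 -
        2 * ∑ j ∈ range n, secSqCoeff ℂ n j * (ω ^ k) ^ j + 1 := by
    have hωk : ω ^ k = Complex.exp (2 * (k * π / n : ℝ) * Complex.I) := by
      rw [← Complex.exp_nat_mul]; push_cast; ring_nf
    have hωkn : (ω ^ k) ^ n = 1 := by rw [pow_right_comm, hω.pow_eq_one, one_pow]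
    rw [hωk] at hωkn ⊢
    rw [Complex.ofReal_tan, ← Complex.tan_sq_add_one_eq_sum hn hωkn]
    ring
  apply Complex.ofReal_injective
  push_cast [← Complex.ofReal_tan]
  simp_rw [htan, sum_add_distrib, sum_sub_distrib, ← mul_sum, hω.sum_range_sq_sum_mul_pow,
    hω.sum_range_sum_mul_pow, sum_congr rfl fun j hj =>
      secSqCoeff_mul_secSqCoeff_sub_mod hn (mem_range.1 hj)]
  have hsq := three_mul_sum_range_sub_two_mul_sq (n : ℂ) n
  simp only [sum_const, card_range, nsmul_eq_mul, mul_one, secSqCoeff, pow_zero, one_mul,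
    Nat.cast_zero, mul_zero, sub_zero]
  linear_combination (n : ℂ) / 3 * hsq

end Tangent

theorem sum_Icc_one_eq_sum_range {M : Type*} [AddCancelCommMonoid M] {f : ℕ → M} {n : ℕ}
    (hf : f n = f 0) : ∑ k ∈ Icc 1 n, f k = ∑ k ∈ range n, f k := by
  have h := sum_range_succ' f n
  rw [sum_range_succ, hf, add_left_inj] at h
  rw [h, ← Ico_add_one_right_eq_Icc, sum_Ico_eq_sum_range, Nat.add_sub_cancel]
  simp_rw [add_comm 1]

theorem sum_Icc_tan_pow_four {n : ℕ} (hn : Odd n) :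
    ∑ k ∈ Icc 1 n, tan (k * π / n) ^ 4 = ((n : ℝ) ^ 4 - 4 * n ^ 2 + 3 * n) / 3 := by
  have hn0 : (n : ℝ) ≠ 0 := Nat.cast_ne_zero.2 hn.pos.ne'
  rw [sum_Icc_one_eq_sum_range (by simp [mul_div_cancel_left₀ π hn0]), sum_range_tan_pow_four hn]

theorem reducedFracSum_tan_pow_four {e : ℕ} (he : Odd e) :
    reducedFracSum (fun q : ℚ => tan (q * π) ^ 4) e =
      ((phiInt 4 e - 4 * phiInt 2 e + 3 * phiInt 1 e : ℤ) : ℝ) / 3 := by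
  have hsum (d : ℕ) (hd : d ∈ e.divisors) : ∑ k ∈ Icc 1 d, tan (((k / d : ℚ) : ℝ) * π) ^ 4 =
      ((d : ℝ) ^ 4 - 4 * d ^ 2 + 3 * d) / 3 := by
    rw [← sum_Icc_tan_pow_four (he.of_dvd_nat (Nat.dvd_of_mem_divisors hd))]
    push_cast
    simp_rw [div_mul_eq_mul_div]
  rw [reducedFracSum_eq_sum_moebius _ he.pos, sum_congr rfl fun d hd => by rw [hsum d hd]]
  simp only [phiInt, zsmul_eq_mul]
  push_cast
  simp only [mul_sum, ← sum_sub_distrib, ← sum_add_distrib, sum_div]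
  exact sum_congr rfl fun d _ => by ring

theorem card_reg {n : ℕ} (hn : n ≠ 0) : ((Reg n).card : ℤ) = rhoInt 1 n := by
  calc ((Reg n).card : ℤ) = ∑ k ∈ Reg n, (fun _ : ℚ => (1 : ℤ)) (k / n) := cast_card _
    _ = ∑ e ∈ unitaryDivisors n, reducedFracSum (fun _ => 1) e :=
      sum_reg_eq_sum_reducedFracSum (fun _ : ℚ => (1 : ℤ)) hn
    _ = rhoInt 1 n := sum_congr rfl fun e he => by
      have he0 : 0 < e := Nat.pos_of_mem_divisors (mem_filter.1 he).1
      simp [reducedFracSum_eq_sum_moebius _ he0, phiInt, mul_comm]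

theorem sum_tan_four_reg_general (n : ℕ) (hodd : Odd n) :
    ∑ k ∈ Reg n, Real.tan (k * Real.pi / n) ^ 4 =
      (1 / 3) * ((rhoInt 4 n : ℝ) - 4 * (rhoInt 2 n : ℝ) + 3 * ((Reg n).card : ℝ)) := by
  have hn : n ≠ 0 := hodd.pos.ne'
  have h_sum : ∑ k ∈ Reg n, tan (k * π / n) ^ 4 = ∑ k ∈ Reg n, tan (((k / n : ℚ) : ℝ) * π) ^ 4 := by
    push_cast
    simp_rw [div_mul_eq_mul_div]
  have hodd_of_mem (e : ℕ) (he : e ∈ unitaryDivisors n) : Odd e :=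
    hodd.of_dvd_nat (Nat.dvd_of_mem_divisors (mem_filter.1 he).1)
  rw [h_sum, sum_reg_eq_sum_reducedFracSum (fun q : ℚ => tan (q * π) ^ 4) hn,
    sum_congr rfl fun e he => reducedFracSum_tan_pow_four (hodd_of_mem e he),
    ← Int.cast_natCast, card_reg hn]
  push_cast [rhoInt, ← sum_div, sum_add_distrib, sum_sub_distrib, ← mul_sum]
  ring

theorem sum_tan_four_reg (n : ℕ) (hn : 1 ≤ n) (hodd : Odd n) :
    ∑ k ∈ Reg n, Real.tan (k * Real.pi / n) ^ 4 =
      (1 / 3) * ((rhoInt 4 n : ℝ) - 4 * (rhoInt 2 n : ℝ) + 3 * ((Reg n).card : ℝ)) :=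
  sum_tan_four_reg_general n hodd
end
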